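/- arXiv:2601.07421 — 6 statements merged into one kernel-verified Lean document; each statement's English description precedes it below -/
import Mathlib

section
/- For every prime p and all natural numbers m ≥ 1 and k ≥ 1, ν_p(∏_{i=1}^k (m+i)) ≤ ν_p(k!) + max_{1 ≤ i ≤ k} ν_p(m+i). -/
/-!
Since `∏_{i=1}^k (m+i) = k! * C(m+k, k)`, it suffices to bound `ν_p C(m+k, k)`. By Kummer's
theorem this is the number of `j ≥ 1` at which adding `m` and `k` in base `p` carries, i.e.
`p^j ≤ m mod p^j + k mod p^j`. Such a carry forces a multiple of `p^j` into `(m, m+k]`, so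
`j ≤ max_i ν_p(m+i)`; hence there are at most that many carries.
-/

open Finset Nat

theorem prod_Icc_add_eq_factorial_mul_choose (m k : ℕ) :
    ∏ i ∈ Icc 1 k, (m + i) = k ! * (m + k).choose k := by
  rw [← ascFactorial_eq_factorial_mul_choose, ascFactorial_eq_prod_range]
  induction k with
  | zero => simp
  | succ k ih => rw [prod_Icc_succ_top (by omega), prod_range_succ, ih, add_right_comm, add_assoc]

theorem exists_dvd_add_of_le_mod_add_mod {d m k : ℕ} (hd : 0 < d) (h : d ≤ k % d + m % d) :
    ∃ i ∈ Icc 1 k, d ∣ m + i := by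
  refine ⟨d - m % d, mem_Icc.2 ⟨?_, ?_⟩, ?_⟩
  · have := mod_lt m hd; omega
  · have := mod_le k d; omega
  · have := div_add_mod m d
    exact ⟨m / d + 1, by have := mod_lt m hd; rw [mul_add]; omega⟩

theorem padicValNat_choose_add_le_sup {p : ℕ} [Fact p.Prime] (m k : ℕ) :
    padicValNat p ((m + k).choose k) ≤ (Icc 1 k).sup fun i => padicValNat p (m + i) := by
  rw [padicValNat_choose' (lt_succ_self _)]
  refine (card_le_card fun j hj => ?_).trans (card_Icc 1 _).le
  obtain ⟨hj, hcarry⟩ := mem_filter.1 hj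
  obtain ⟨i, hi, hdvd⟩ :=
    exists_dvd_add_of_le_mod_add_mod (pow_pos (Fact.out : p.Prime).pos j) hcarry
  have hji : j ≤ padicValNat p (m + i) := (padicValNat_dvd_iff_le (by grind)).1 hdvd
  exact mem_Icc.2 ⟨(mem_Ico.1 hj).1, hji.trans (le_sup (f := fun i => padicValNat p (m + i)) hi)⟩

theorem stmt2_general (p : ℕ) (hp : p.Prime) (m k : ℕ) :
    padicValNat p (∏ i ∈ Finset.Icc 1 k, (m + i)) ≤
      padicValNat p (k.factorial) +
        (Finset.Icc 1 k).sup (fun i => padicValNat p (m + i)) := by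
  have : Fact p.Prime := ⟨hp⟩
  rw [prod_Icc_add_eq_factorial_mul_choose,
    padicValNat.mul (factorial_ne_zero k) (choose_ne_zero (le_add_left k m))]
  exact Nat.add_le_add_left (padicValNat_choose_add_le_sup m k) _

theorem stmt2 (p : ℕ) (hp : p.Prime) (m k : ℕ) (hm : 1 ≤ m) (hk : 1 ≤ k) :
    padicValNat p (∏ i ∈ Finset.Icc 1 k, (m + i)) ≤
      padicValNat p (k.factorial) +
        (Finset.Icc 1 k).sup (fun i => padicValNat p (m + i)) :=
  stmt2_general p hp m k
end

section
/- Let p be a prime with p > 2k, where k ≥ 1. If p^J divides m + i for some 1 ≤ i ≤ k and J ≥ 1, then the number of carries when adding m + m in base p is at least J; equivalently, ν_p(C(2m, m)) ≥ J. -/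
/-!
By Kummer's theorem every position `j` with `p ^ j ≤ 2 * (m % p ^ j)` contributes a carry to
`m + m` in base `p`. For `1 ≤ j ≤ J` we have `p ^ j ∣ m + i`, so `m % p ^ j = p ^ j - i`, and
`p ^ j ≤ 2 * (p ^ j - i)` because `2 * i ≤ 2 * k < p ≤ p ^ j`.
-/

open Finset

theorem Nat.mod_eq_sub_of_dvd_add {n m i : ℕ} (hi : 0 < i) (hin : i ≤ n) (hdvd : n ∣ m + i) :
    m % n = n - i := by
  have hmod : m % n < n := Nat.mod_lt m (hi.trans_le hin)
  have hn_dvd : n ∣ m % n + i := by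
    rwa [Nat.dvd_iff_mod_eq_zero, Nat.mod_add_mod, ← Nat.dvd_iff_mod_eq_zero]
  have := Nat.eq_of_dvd_of_lt_two_mul (by omega) hn_dvd (by omega)
  omega

theorem Nat.le_mod_add_mod_of_dvd_add {n m i : ℕ} (hi : 0 < i) (h2i : 2 * i ≤ n)
    (hdvd : n ∣ m + i) : n ≤ m % n + m % n := by
  rw [Nat.mod_eq_sub_of_dvd_add hi (by omega) hdvd]
  omega

theorem le_padicValNat_choose_two_mul {p m J : ℕ} [Fact p.Prime]
    (hcarry : ∀ j ∈ Icc 1 J, p ^ j ≤ m % p ^ j + m % p ^ j) :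
    J ≤ padicValNat p ((2 * m).choose m) := by
  set b := max (J + 1) (Nat.log p (m + m) + 1)
  rw [two_mul, padicValNat_choose' (b := b) (by omega)]
  have hsub : Icc 1 J ⊆ {j ∈ Ico 1 b | p ^ j ≤ m % p ^ j + m % p ^ j} := by
    intro j hj
    obtain ⟨hj1, hjJ⟩ := mem_Icc.mp hj
    exact mem_filter.mpr ⟨mem_Ico.mpr ⟨hj1, by omega⟩, hcarry j hj⟩
  simpa using card_le_card hsub

theorem stmt4_general (p k : ℕ) (hp : p.Prime) (hpk : 2 * k < p)
    (m i J : ℕ) (hi1 : 1 ≤ i) (hik : i ≤ k)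
    (hdvd : p ^ J ∣ (m + i)) :
    J ≤ padicValNat p ((2 * m).choose m) := by
  have : Fact p.Prime := ⟨hp⟩
  refine le_padicValNat_choose_two_mul fun j hj => ?_
  obtain ⟨hj1, hjJ⟩ := mem_Icc.mp hj
  have h2i : 2 * i ≤ p ^ j :=
    calc 2 * i ≤ p := by omega
      _ ≤ p ^ j := Nat.le_self_pow (by omega) p
  exact Nat.le_mod_add_mod_of_dvd_add hi1 h2i ((pow_dvd_pow p hjJ).trans hdvd)

theorem stmt4 (p k : ℕ) (hp : p.Prime) (hk : 1 ≤ k) (hpk : 2 * k < p)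
    (m i J : ℕ) (hi1 : 1 ≤ i) (hik : i ≤ k) (hJ : 1 ≤ J)
    (hdvd : p ^ J ∣ (m + i)) :
    J ≤ padicValNat p ((2 * m).choose m) :=
  stmt4_general p k hp hpk m i J hi1 hik hdvd
end

section
/- If p is a prime with p > 2k and k ≥ 1, then for all natural numbers m, ν_p(∏_{i=1}^k (m+i)) = max_{1 ≤ i ≤ k} ν_p(m+i), and this common value is at most ν_p(C(2m, m)). -/
/-!
Fewer than `p` consecutive integers contain at most one multiple of `p`, so the valuation of
their product is the valuation of that single multiple, i.e. the maximum. For the bound, if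
`p ^ j ∣ m + i` with `0 < 2 * i ≤ p ≤ p ^ j`, then `m ≡ -i` modulo `p ^ j` and its residue
`p ^ j - i` is at least `p ^ j / 2`, so adding `m + m` carries at digit `j`. Each
`j ≤ ν_p(m + i)` thus contributes a carry, and Kummer's theorem concludes.
-/

open Finset

theorem Finset.sum_eq_sup_of_subsingleton_support {ι : Type*} {s : Finset ι} {g : ι → ℕ}
    (h : ∀ i ∈ s, ∀ j ∈ s, g i ≠ 0 → g j ≠ 0 → i = j) :
    ∑ i ∈ s, g i = s.sup g := by
  by_cases hne : ∃ i ∈ s, g i ≠ 0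
  · obtain ⟨i₀, hi₀, hgi₀⟩ := hne
    have hzero : ∀ j ∈ s, j ≠ i₀ → g j = 0 := fun j hj hji₀ => by
      by_contra hgj
      exact hji₀ (h j hj i₀ hi₀ hgj hgi₀)
    rw [sum_eq_single_of_mem i₀ hi₀ hzero]
    refine le_antisymm (Finset.le_sup (f := g) hi₀) (Finset.sup_le fun j hj => ?_)
    obtain rfl | hji₀ := eq_or_ne j i₀
    · exact le_rfl
    · simp [hzero j hj hji₀]
  · push Not at hne
    rw [sum_eq_zero hne, eq_comm]
    exact (Finset.sup_eq_bot_iff g s).2 hne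

theorem padicValNat_prod {ι : Type*} {p : ℕ} [Fact p.Prime] {s : Finset ι} {f : ι → ℕ}
    (hf : ∀ i ∈ s, f i ≠ 0) :
    padicValNat p (∏ i ∈ s, f i) = ∑ i ∈ s, padicValNat p (f i) := by
  have hp : p.Prime := Fact.out
  simp only [← Nat.factorization_def _ hp, Nat.factorization_prod hf, Finsupp.finsetSum_apply]

theorem padicValNat_prod_eq_sup {ι : Type*} {p : ℕ} [Fact p.Prime] {s : Finset ι} {f : ι → ℕ}
    (hf : ∀ i ∈ s, f i ≠ 0) (huniq : ∀ i ∈ s, ∀ j ∈ s, p ∣ f i → p ∣ f j → i = j) :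
    padicValNat p (∏ i ∈ s, f i) = s.sup fun i => padicValNat p (f i) := by
  rw [padicValNat_prod hf]
  exact sum_eq_sup_of_subsingleton_support fun i hi j hj hvi hvj =>
    huniq i hi j hj (dvd_of_one_le_padicValNat (Nat.one_le_iff_ne_zero.2 hvi))
      (dvd_of_one_le_padicValNat (Nat.one_le_iff_ne_zero.2 hvj))

theorem Nat.eq_of_dvd_add_of_dvd_add {p m i j : ℕ} (hi : i < p) (hj : j < p)
    (hpi : p ∣ m + i) (hpj : p ∣ m + j) : i = j := by
  have hmod : m + i ≡ m + j [MOD p] :=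
    (Nat.modEq_zero_iff_dvd.2 hpi).trans (Nat.modEq_zero_iff_dvd.2 hpj).symm
  exact (Nat.ModEq.add_left_cancel' m hmod).eq_of_lt_of_lt hi hj

theorem Nat.mod_add_eq_of_dvd_add {m i n : ℕ} (hi : 0 < i) (hin : i ≤ n) (h : n ∣ m + i) :
    m % n + i = n := by
  have hn : 0 < n := hi.trans_le hin
  have hdvd : n ∣ m % n + i := by
    have := Nat.div_add_mod m n
    exact (Nat.dvd_add_right (dvd_mul_right n (m / n))).1 (by rwa [← add_assoc, this])
  exact Nat.eq_of_dvd_of_lt_two_mul (by omega) hdvd (by have := Nat.mod_lt m hn; omega)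

theorem padicValNat_add_le_padicValNat_choose {p m i : ℕ} [Fact p.Prime] (hi : 0 < i)
    (hip : 2 * i ≤ p) : padicValNat p (m + i) ≤ padicValNat p ((m + m).choose m) := by
  have hp : p.Prime := Fact.out
  set v := padicValNat p (m + i)
  obtain hv | hv := Nat.eq_zero_or_pos v
  · simp [hv]
  have hpv : p ^ v ≤ m + i := Nat.le_of_dvd (by omega) pow_padicValNat_dvd
  have hpp : p ≤ p ^ v := Nat.le_self_pow hv.ne' p
  rw [padicValNat_choose' (Nat.lt_succ_self _)]
  have hcarry : Ico 1 (v + 1) ⊆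
      {j ∈ Ico 1 (Nat.log p (m + m) + 1) | p ^ j ≤ m % p ^ j + m % p ^ j} := by
    intro j hj
    obtain ⟨hj1, hjv⟩ := mem_Ico.1 hj
    have hpj : p ^ j ≤ p ^ v := Nat.pow_le_pow_right hp.pos (by omega)
    have hlog : j ≤ Nat.log p (m + m) := Nat.le_log_of_pow_le hp.one_lt (by omega)
    have hpj' : p ≤ p ^ j := Nat.le_self_pow (by omega) p
    have hres : m % p ^ j + i = p ^ j := Nat.mod_add_eq_of_dvd_add hi (by omega)
      ((pow_dvd_pow p (by omega)).trans pow_padicValNat_dvd)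
    simp only [mem_filter, mem_Ico]
    omega
  simpa using card_le_card hcarry

theorem stmt5_general (p k : ℕ) (hp : p.Prime) (hpk : 2 * k < p) (m : ℕ) :
    padicValNat p (∏ i ∈ Finset.Icc 1 k, (m + i)) =
        (Finset.Icc 1 k).sup (fun i => padicValNat p (m + i)) ∧
      (Finset.Icc 1 k).sup (fun i => padicValNat p (m + i)) ≤
        padicValNat p ((2 * m).choose m) := by
  have : Fact p.Prime := ⟨hp⟩
  constructor
  · refine padicValNat_prod_eq_sup (fun i hi => ?_) fun i hi j hj => ?_
    · rw [mem_Icc] at hi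
      omega
    · rw [mem_Icc] at hi hj
      exact Nat.eq_of_dvd_add_of_dvd_add (by omega) (by omega)
  · rw [two_mul]
    refine Finset.sup_le fun i hi => ?_
    rw [mem_Icc] at hi
    exact padicValNat_add_le_padicValNat_choose (by omega) (by omega)

theorem stmt5 (p k : ℕ) (hp : p.Prime) (hk : 1 ≤ k) (hpk : 2 * k < p) (m : ℕ) :
    padicValNat p (∏ i ∈ Finset.Icc 1 k, (m + i)) =
        (Finset.Icc 1 k).sup (fun i => padicValNat p (m + i)) ∧
      (Finset.Icc 1 k).sup (fun i => padicValNat p (m + i)) ≤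
        padicValNat p ((2 * m).choose m) :=
  stmt5_general p k hp hpk m
end

section
/- Let p be a prime and m a natural number with base-p digits a_0, a_1, a_2, .... If X is the number of indices j (among the first L digits, for any L) with a_j ≥ ⌈p/2⌉, then ν_p(C(2m, m)) ≥ X. In other words, each base-p digit of m that is at least ⌈p/2⌉ forces a carry when doubling m in base p. -/
/-! By Kummer's theorem (`padicValNat_choose'`), `ν_p(C(2m, m))` counts the positions `i ≥ 1`
with `p ^ i ≤ m % p ^ i + m % p ^ i`, i.e. the carries of `m + m` in base `p`. A digit
`a_j ≥ ⌈p/2⌉` gives `2 (m % p ^ (j+1)) ≥ 2 p ^ j a_j ≥ p ^ (j+1)`, a carry out of position `j`,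
so `j ↦ j + 1` injects the large digits into the carries. -/

theorem pow_succ_le_mod_add_mod_of_half_le_digit {p m j : ℕ} (hdigit : (p + 1) / 2 ≤ m / p ^ j % p) :
    p ^ (j + 1) ≤ m % p ^ (j + 1) + m % p ^ (j + 1) := by
  have hmod : m % p ^ (j + 1) = m % p ^ j + p ^ j * (m / p ^ j % p) := by
    rw [pow_succ]; exact Nat.mod_mul
  have hlead : p ^ j * ((p + 1) / 2) ≤ m % p ^ (j + 1) := by
    rw [hmod]; exact (Nat.mul_le_mul_left _ hdigit).trans (Nat.le_add_left _ _)
  calc p ^ (j + 1) = p ^ j * p := pow_succ p j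
    _ ≤ p ^ j * (2 * ((p + 1) / 2)) := Nat.mul_le_mul_left _ (by omega)
    _ = p ^ j * ((p + 1) / 2) + p ^ j * ((p + 1) / 2) := by ring
    _ ≤ m % p ^ (j + 1) + m % p ^ (j + 1) := Nat.add_le_add hlead hlead

theorem stmt6 (p : ℕ) (hp : p.Prime) (m L : ℕ) :
    ((Finset.range L).filter (fun j => (p + 1) / 2 ≤ m / p ^ j % p)).card ≤
      padicValNat p ((2 * m).choose m) := by
  have : Fact p.Prime := ⟨hp⟩
  set b := max (L + 1) (Nat.log p (m + m) + 1)
  have hlog : Nat.log p (m + m) < b := Nat.lt_of_succ_le (le_max_right _ _)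
  rw [two_mul, padicValNat_choose' hlog]
  refine Finset.card_le_card_of_injOn (· + 1) (fun j hj => ?_) (fun _ _ _ _ h => Nat.succ_injective h)
  obtain ⟨hjL, hdigit⟩ := Finset.mem_filter.mp hj
  refine Finset.mem_filter.mpr ⟨Finset.mem_Ico.mpr ⟨Nat.le_add_left 1 j, ?_⟩,
    pow_succ_le_mod_add_mod_of_half_le_digit hdigit⟩
  exact (Nat.succ_lt_succ (Finset.mem_range.mp hjL)).trans_le (le_max_left _ _)
end

section
/- Let c > 0. For all sufficiently large M, setting k = ⌊c log M⌋, there exists an integer m ∈ [M, 2M] such that for every prime p ≤ 2k: (i) at least half of the expected number μ_p = L_p θ(p) of the first L_p = ⌊(9/10) log M / log p⌋ base-p digits of m are ≥ ⌈p/2⌉, i.e. X_p(m) ≥ μ_p/2, and (ii) no m+i with 1 ≤ i ≤ k is divisible by p^{J_p + t(M)}, where J_p = ⌊log_p k⌋ and t(M) = ⌈10 log log M⌉. -/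
/-!
A union bound over the primes `p ≤ 2k`. The number of high base-`p` digits of `m` among the first
`L` depends only on `m mod p^L`, and summed over one period its generating function factors as
`(h + (p - h) x)^L`. The Chernoff bound at `x = 1/2` shows that all but a fraction `e^{-L/20}` of
the residues have at least half the expected number of high digits, so, as `p^{L_p} ≤ M^{9/10}`,
at most `M e^{-L_p/20} + 2 M^{9/10}` integers of `[M, 2M]` fail condition (i). Each divisibility
`p^{J_p + t} ∣ m + i` excludes at most `M / 2^t + 2` of them, and `2^t ≥ (log M)^6`. Since
`k ≤ c log M` and `L_p ≳ √(log M)`, fewer than `M + 1` integers are excluded in total.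
-/

open Real Finset Filter Asymptotics

/-- `highDigitCount p ((p + 1) / 2) L_p m` is `X_p(m)`, as `⌈p/2⌉ = (p + 1) / 2`. -/
def highDigitCount (p h L m : ℕ) : ℕ := #{j ∈ range L | h ≤ m / p ^ j % p}

lemma highDigitCount_mod_pow (p h L m : ℕ) :
    highDigitCount p h L (m % p ^ L) = highDigitCount p h L m := by
  refine congrArg card (filter_congr fun j hj => ?_)
  rw [← Nat.mod_mul_right_div_self, ← Nat.mod_mul_right_div_self m, ← pow_succ,
    Nat.mod_mod_of_dvd _ (pow_dvd_pow p (mem_range.mp hj))]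

lemma highDigitCount_add_mul {p r : ℕ} (hr : r < p) (h L q : ℕ) :
    highDigitCount p h (L + 1) (r + p * q)
      = (if h ≤ r then 1 else 0) + highDigitCount p h L q := by
  have hdiv : (r + p * q) / p = q := by
    rw [Nat.add_mul_div_left _ _ (by omega), Nat.div_eq_of_lt hr, zero_add]
  simp only [highDigitCount, card_filter, sum_range_succ', pow_zero, Nat.div_one,
    Nat.add_mul_mod_self_left, Nat.mod_eq_of_lt hr, pow_succ', ← Nat.div_div_eq_div_mul, hdiv]
  ring

lemma sum_range_mul {M : Type*} [AddCommMonoid M] (f : ℕ → M) (a b : ℕ) :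
    ∑ m ∈ range (a * b), f m = ∑ r ∈ range a, ∑ q ∈ range b, f (r + a * q) := by
  induction b with
  | zero => simp
  | succ b ih =>
    rw [Nat.mul_succ, sum_range_add, ih, ← sum_add_distrib]
    simp only [sum_range_succ, add_comm]

lemma sum_range_pow_highDigitCount {R : Type*} [CommSemiring R] {p h : ℕ} (hh : h ≤ p)
    (x : R) (L : ℕ) :
    ∑ m ∈ range (p ^ L), x ^ highDigitCount p h L m = (h + (p - h : ℕ) * x) ^ L := by
  induction L with
  | zero => simp [highDigitCount]
  | succ L ih =>
    have hlow : ∀ r ∈ range h, x ^ (if h ≤ r then 1 else 0) = 1 := fun r hr => by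
      simp [not_le.mpr (mem_range.mp hr)]
    have hhigh : ∀ r ∈ Ico h p, x ^ (if h ≤ r then 1 else 0) = x := fun r hr => by
      simp [(mem_Ico.mp hr).1]
    have hdigit : ∑ r ∈ range p, x ^ (if h ≤ r then 1 else 0) = h + (p - h : ℕ) * x := by
      rw [← sum_range_add_sum_Ico _ hh, sum_congr rfl hlow, sum_congr rfl hhigh]
      simp
    calc ∑ m ∈ range (p ^ (L + 1)), x ^ highDigitCount p h (L + 1) m
        = ∑ r ∈ range p, ∑ q ∈ range (p ^ L),
            x ^ (if h ≤ r then 1 else 0) * x ^ highDigitCount p h L q := by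
          rw [pow_succ', sum_range_mul]
          refine sum_congr rfl fun r hr => sum_congr rfl fun q _ => ?_
          rw [highDigitCount_add_mul (mem_range.mp hr), pow_add]
      _ = _ := by rw [← sum_mul_sum, hdigit, ih, pow_succ']

lemma card_filter_lt_le_two_rpow_mul_sum {α : Type*} (s : Finset α) (f : α → ℕ) (μ : ℝ) :
    (#{a ∈ s | (f a : ℝ) < μ} : ℝ) ≤ 2 ^ μ * ∑ a ∈ s, (1 / 2 : ℝ) ^ f a := by
  rw [mul_sum, card_eq_sum_ones, Nat.cast_sum, sum_filter]
  refine sum_le_sum fun a _ => ?_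
  split_ifs with ha
  · rw [one_div, inv_pow, ← div_eq_mul_inv, Nat.cast_one, one_le_div (by positivity),
      ← rpow_natCast]
    exact rpow_le_rpow_of_exponent_le one_le_two ha.le
  · positivity

lemma two_rpow_mul_one_sub_half_pow_le {θ : ℝ} (hθ : 1 / 3 ≤ θ) (hθ' : θ ≤ 2) (L : ℕ) :
    (2 : ℝ) ^ (L * θ / 2) * (1 - θ / 2) ^ L ≤ exp (-L / 20) := by
  calc (2 : ℝ) ^ (L * θ / 2) * (1 - θ / 2) ^ L
      ≤ exp (L * θ / 2 * log 2) * exp (-(θ / 2)) ^ L := by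
        rw [rpow_def_of_pos two_pos, mul_comm (log 2)]
        gcongr
        · linarith
        · linarith [add_one_le_exp (-(θ / 2))]
    _ = exp (-(L * θ * (1 - log 2) / 2)) := by rw [← exp_nat_mul, ← exp_add]; ring_nf
    _ ≤ exp (-L / 20) := by
        -- `(1 - log 2) / 6 > 1 / 20`
        have hlog := log_two_lt_d9
        have hLθ : (L : ℝ) / 3 ≤ L * θ := by nlinarith [L.cast_nonneg (α := ℝ)]
        gcongr
        nlinarith

lemma card_filter_highDigitCount_lt_le {p h : ℕ} (hp : 0 < p) (hh : h ≤ p)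
    (h3 : p ≤ 3 * (p - h)) (L : ℕ) :
    (#{r ∈ range (p ^ L) | (highDigitCount p h L r : ℝ) < L * ((p - h : ℕ) / p) / 2} : ℝ)
      ≤ p ^ L * exp (-L / 20) := by
  replace hp : (0 : ℝ) < p := by exact_mod_cast hp
  set θ : ℝ := (p - h : ℕ) / p with hθ
  have hθ_ge : 1 / 3 ≤ θ := by
    have : (p : ℝ) ≤ 3 * (p - h : ℕ) := by exact_mod_cast h3
    rw [hθ, le_div_iff₀ hp]; linarith
  have hθ_le : θ ≤ 2 := by
    have : (p - h : ℕ) ≤ 2 * p := by omega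
    rw [hθ, div_le_iff₀ hp]; exact_mod_cast this
  have hmean : (h : ℝ) + (p - h : ℕ) * (1 / 2) = p * (1 - θ / 2) := by
    rw [hθ, Nat.cast_sub hh]; field_simp; ring
  calc (#{r ∈ range (p ^ L) | (highDigitCount p h L r : ℝ) < L * θ / 2} : ℝ)
      ≤ 2 ^ (L * θ / 2) * ∑ r ∈ range (p ^ L), (1 / 2 : ℝ) ^ highDigitCount p h L r :=
        card_filter_lt_le_two_rpow_mul_sum _ _ _
    _ = p ^ L * (2 ^ (L * θ / 2) * (1 - θ / 2) ^ L) := by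
        rw [sum_range_pow_highDigitCount hh, hmean, mul_pow]; ring
    _ ≤ p ^ L * exp (-L / 20) := by
        gcongr; exact two_rpow_mul_one_sub_half_pow_le hθ_ge hθ_le L

lemma card_filter_Icc_mod_le {Q : ℕ} (hQ : 0 < Q) (a n : ℕ) (P : ℕ → Prop)
    [DecidablePred P] :
    (#{m ∈ Icc a (a + n) | P (m % Q)} : ℝ) ≤ (n / Q + 2) * #{r ∈ range Q | P r} := by
  have hinj : #{m ∈ Icc a (a + n) | P (m % Q)}
      ≤ #(Icc (a / Q) ((a + n) / Q) ×ˢ {r ∈ range Q | P r}) := by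
    refine card_le_card_of_injOn (fun m => (m / Q, m % Q)) (fun m hm => ?_)
      (fun m₁ _ m₂ _ h => ?_)
    · simp only [mem_coe, mem_filter, mem_Icc] at hm
      simp only [mem_coe, mem_product, mem_Icc, mem_filter, mem_range]
      exact ⟨⟨Nat.div_le_div_right hm.1.1, Nat.div_le_div_right hm.1.2⟩,
        Nat.mod_lt _ hQ, hm.2⟩
    · obtain ⟨hdiv, hmod⟩ := Prod.mk.inj h
      rw [← Nat.div_add_mod m₁ Q, ← Nat.div_add_mod m₂ Q, hdiv, hmod]
  have hblocks : (a + n) / Q + 1 - a / Q ≤ n / Q + 2 := by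
    have := Nat.add_div_le_div_add_div_add_one a n Q
    generalize (a + n) / Q = x, a / Q = y, n / Q = z at *
    omega
  calc (#{m ∈ Icc a (a + n) | P (m % Q)} : ℝ)
      ≤ ((n / Q + 2 : ℕ) : ℝ) * #{r ∈ range Q | P r} := by
        rw [card_product, Nat.card_Icc] at hinj
        exact_mod_cast hinj.trans (Nat.mul_le_mul_right _ hblocks)
    _ ≤ (n / Q + 2) * #{r ∈ range Q | P r} := by
        gcongr; push_cast; gcongr; exact Nat.cast_div_le

lemma card_filter_Icc_dvd_add_le {q : ℕ} (hq : 0 < q) (a n i : ℕ) :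
    (#{m ∈ Icc a (a + n) | q ∣ m + i} : ℝ) ≤ n / q + 2 := by
  have hres : #{r ∈ range q | q ∣ r + i} ≤ 1 := by
    refine card_le_one.mpr fun r₁ h₁ r₂ h₂ => ?_
    simp only [mem_filter, mem_range] at h₁ h₂
    have h : r₁ + i ≡ r₂ + i [MOD q] := (Nat.modEq_zero_iff_dvd.mpr h₁.2).trans
      (Nat.modEq_zero_iff_dvd.mpr h₂.2).symm
    simpa [Nat.ModEq, Nat.mod_eq_of_lt h₁.1, Nat.mod_eq_of_lt h₂.1] using
      Nat.ModEq.add_right_cancel' i h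
  have hmod : {m ∈ Icc a (a + n) | q ∣ m + i} = {m ∈ Icc a (a + n) | q ∣ m % q + i} :=
    filter_congr fun m _ => by
      rw [Nat.dvd_iff_mod_eq_zero, Nat.dvd_iff_mod_eq_zero, Nat.mod_add_mod]
  rw [hmod]
  calc (#{m ∈ Icc a (a + n) | q ∣ m % q + i} : ℝ)
      ≤ (n / q + 2) * #{r ∈ range q | q ∣ r + i} :=
        card_filter_Icc_mod_le hq a n (q ∣ · + i)
    _ ≤ (n / q + 2) * 1 := by gcongr; exact_mod_cast hres
    _ = n / q + 2 := mul_one _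

lemma card_filter_Icc_highDigitCount_lt_le {p h : ℕ} (hp : 0 < p) (hh : h ≤ p)
    (h3 : p ≤ 3 * (p - h)) (a n L : ℕ) :
    (#{m ∈ Icc a (a + n) | (highDigitCount p h L m : ℝ) < L * ((p - h : ℕ) / p) / 2} : ℝ)
      ≤ n * exp (-L / 20) + 2 * p ^ L := by
  set μ : ℝ := L * ((p - h : ℕ) / p) / 2
  have hmod : {m ∈ Icc a (a + n) | (highDigitCount p h L m : ℝ) < μ}
      = {m ∈ Icc a (a + n) | (highDigitCount p h L (m % p ^ L) : ℝ) < μ} :=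
    filter_congr fun m _ => by rw [highDigitCount_mod_pow]
  have hpL : (0 : ℝ) < p ^ L := by positivity
  rw [hmod]
  calc (#{m ∈ Icc a (a + n) | (highDigitCount p h L (m % p ^ L) : ℝ) < μ} : ℝ)
      ≤ (n / (p ^ L : ℕ) + 2) * #{r ∈ range (p ^ L) | (highDigitCount p h L r : ℝ) < μ} :=
        card_filter_Icc_mod_le (pow_pos hp L) a n (fun r => (highDigitCount p h L r : ℝ) < μ)
    _ ≤ (n / p ^ L + 2) * (p ^ L * exp (-L / 20)) := by
        push_cast
        gcongr
        exact card_filter_highDigitCount_lt_le hp hh h3 L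
    _ = n * exp (-L / 20) + 2 * p ^ L * exp (-L / 20) := by field_simp
    _ ≤ n * exp (-L / 20) + 2 * p ^ L := by
        have : (0 : ℝ) ≤ L := L.cast_nonneg
        have he : exp (-L / 20) ≤ 1 := exp_le_one_iff.mpr (by linarith)
        nlinarith [mul_le_mul_of_nonneg_left he hpL.le]

noncomputable def theta (p : ℕ) : ℝ := if p = 2 then 1 / 2 else ((p : ℝ) - 1) / (2 * p)

lemma theta_eq {p : ℕ} (hp : p.Prime) : theta p = ((p - (p + 1) / 2 : ℕ) : ℝ) / p := by
  rcases hp.eq_two_or_odd' with rfl | ⟨r, rfl⟩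
  · norm_num [theta]
  · have hr : 2 * r + 1 - (2 * r + 1 + 1) / 2 = r := by omega
    rw [theta, if_neg (by omega), hr]
    push_cast
    field_simp
    ring

def IsGood (p L e k m : ℕ) : Prop :=
  (highDigitCount p ((p + 1) / 2) L m : ℝ) ≥ L * theta p / 2 ∧
    ∀ i ∈ Icc 1 k, ¬ p ^ e ∣ m + i

noncomputable instance (p L e k : ℕ) : DecidablePred (IsGood p L e k) := fun _ => by
  unfold IsGood; infer_instance

lemma exists_forall_of_sum_card_filter_not_lt {ι α : Type*} {s : Finset α} {P : Finset ι}
    {good : ι → α → Prop} [∀ i, DecidablePred (good i)]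
    (h : ∑ i ∈ P, #{a ∈ s | ¬ good i a} < #s) : ∃ a ∈ s, ∀ i ∈ P, good i a := by
  classical
  by_contra! H
  have hcover : s ⊆ P.biUnion fun i => {a ∈ s | ¬ good i a} := fun a ha => by
    obtain ⟨i, hi, hbad⟩ := H a ha
    exact mem_biUnion.mpr ⟨i, hi, mem_filter.mpr ⟨ha, hbad⟩⟩
  exact ((card_le_card hcover).trans card_biUnion_le).not_gt h

lemma card_filter_Icc_not_isGood_le {p : ℕ} (hp : p.Prime) (M k t L J : ℕ) :
    (#{m ∈ Icc M (2 * M) | ¬ IsGood p L (J + t) k m} : ℝ)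
      ≤ M * exp (-L / 20) + 2 * p ^ L + k * (M / 2 ^ t + 2) := by
  have hp2 := hp.two_le
  set digitBad :=
    {m ∈ Icc M (M + M) | (highDigitCount p ((p + 1) / 2) L m : ℝ) < L * theta p / 2}
  set dvdBad := fun i => {m ∈ Icc M (M + M) | p ^ (J + t) ∣ m + i}
  have hsub : {m ∈ Icc M (2 * M) | ¬ IsGood p L (J + t) k m}
      ⊆ digitBad ∪ (Icc 1 k).biUnion dvdBad := by
    intro m hm
    simp only [IsGood, mem_filter, two_mul, not_and_or, not_le, not_forall, not_not] at hm
    obtain ⟨hm, hdigit | ⟨i, hi, hdvd⟩⟩ := hm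
    · exact mem_union_left _ (mem_filter.mpr ⟨hm, hdigit⟩)
    · exact mem_union_right _ (mem_biUnion.mpr ⟨i, hi, mem_filter.mpr ⟨hm, hdvd⟩⟩)
  have hdigit : (#digitBad : ℝ) ≤ M * exp (-L / 20) + 2 * p ^ L := by
    have := card_filter_Icc_highDigitCount_lt_le (h := (p + 1) / 2) hp.pos (by omega) (by omega)
      M M L
    rwa [← theta_eq hp] at this
  have hdvd : ∀ i, (#(dvdBad i) : ℝ) ≤ M / 2 ^ t + 2 := fun i => by
    have h2t : (2 : ℝ) ^ t ≤ (p ^ (J + t) : ℕ) := by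
      push_cast
      calc (2 : ℝ) ^ t ≤ 2 ^ (J + t) := pow_le_pow_right₀ one_le_two (by omega)
        _ ≤ p ^ (J + t) := by gcongr; exact_mod_cast hp2
    calc (#(dvdBad i) : ℝ) ≤ M / (p ^ (J + t) : ℕ) + 2 :=
          card_filter_Icc_dvd_add_le (pow_pos hp.pos _) M M i
      _ ≤ M / 2 ^ t + 2 := by gcongr
  calc _ ≤ (#(digitBad ∪ (Icc 1 k).biUnion dvdBad) : ℝ) := by exact_mod_cast card_le_card hsub
    _ ≤ #digitBad + ∑ i ∈ Icc 1 k, (#(dvdBad i) : ℝ) := by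
        exact_mod_cast (card_union_le _ _).trans (Nat.add_le_add_left card_biUnion_le _)
    _ ≤ M * exp (-L / 20) + 2 * p ^ L + ∑ i ∈ Icc 1 k, (M / 2 ^ t + 2 : ℝ) := by
        gcongr with i; exact hdvd i
    _ = M * exp (-L / 20) + 2 * p ^ L + k * (M / 2 ^ t + 2) := by
        rw [sum_const, Nat.card_Icc, Nat.add_sub_cancel, nsmul_eq_mul]

noncomputable def exceptionalCountBound (M k L R T : ℝ) : ℝ :=
  2 * k * (M * exp (-L / 20) + 2 * R + k * (M / T + 2))

theorem exists_mem_Icc_forall_prime_le_isGood {M k t L₀ : ℕ} {L J : ℕ → ℕ} {R : ℝ}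
    (hR : 0 ≤ R) (hL : ∀ p, p.Prime → p ≤ 2 * k → L₀ ≤ L p ∧ (p : ℝ) ^ L p ≤ R)
    (hbound : exceptionalCountBound M k L₀ R (2 ^ t) < M + 1) :
    ∃ m ∈ Icc M (2 * M), ∀ p, p.Prime → p ≤ 2 * k → IsGood p (L p) (J p + t) k m := by
  set β : ℝ := M * exp (-L₀ / 20) + 2 * R + k * (M / 2 ^ t + 2) with hβ
  set P : Finset ℕ := {p ∈ Icc 1 (2 * k) | p.Prime}
  have hP : (#P : ℝ) ≤ 2 * k := by
    have := (card_filter_le (Icc 1 (2 * k)) Nat.Prime).trans (Nat.card_Icc 1 (2 * k)).le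
    exact_mod_cast this.trans (by omega)
  have hper : ∀ p ∈ P,
      (#{m ∈ Icc M (2 * M) | ¬ IsGood p (L p) (J p + t) k m} : ℝ) ≤ β := fun p hpP => by
    obtain ⟨hpk, hp⟩ := mem_filter.mp hpP
    obtain ⟨hL₀, hpR⟩ := hL p hp (mem_Icc.mp hpk).2
    refine (card_filter_Icc_not_isGood_le hp M k t (L p) (J p)).trans ?_
    rw [hβ]
    gcongr
  have hcount : ∑ p ∈ P, (#{m ∈ Icc M (2 * M) | ¬ IsGood p (L p) (J p + t) k m} : ℝ)
      < #(Icc M (2 * M)) :=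
    calc _ ≤ ∑ p ∈ P, β := sum_le_sum hper
      _ = #P * β := by rw [sum_const, nsmul_eq_mul]
      _ ≤ 2 * k * β := by gcongr
      _ < M + 1 := hbound
      _ = #(Icc M (2 * M)) := by
        rw [Nat.card_Icc, show 2 * M + 1 - M = M + 1 by omega]; push_cast; rfl
  obtain ⟨m, hm, hgood⟩ := exists_forall_of_sum_card_filter_not_lt (by exact_mod_cast hcount)
  exact ⟨m, hm, fun p hp hpk =>
    hgood p (mem_filter.mpr ⟨mem_Icc.mpr ⟨hp.one_le, hpk⟩, hp⟩)⟩

lemma pow_floor_div_log_le_exp {x a : ℝ} (hx : 1 < x) (ha : 0 ≤ a) :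
    x ^ ⌊a / log x⌋₊ ≤ exp a := by
  have hlog : 0 < log x := log_pos hx
  calc x ^ ⌊a / log x⌋₊ = exp (⌊a / log x⌋₊ * log x) := by
        rw [exp_nat_mul, exp_log (by linarith)]
    _ ≤ exp a := exp_le_exp.mpr ((le_div_iff₀ hlog).mp (Nat.floor_le (by positivity)))

lemma eventually_mul_pow_le_exp (C : ℝ) (n : ℕ) {b : ℝ} (hb : 0 < b) :
    ∀ᶠ x in atTop, C * x ^ n ≤ exp (b * x) := by
  filter_upwards [((isLittleO_pow_exp_pos_mul_atTop n hb).const_mul_left C).bound one_pos]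
    with x hx
  rw [one_mul, norm_of_nonneg (exp_pos _).le] at hx
  exact (le_norm_self _).trans hx

lemma log_le_two_mul_sqrt {x : ℝ} (hx : 0 < x) : log x ≤ 2 * √x := by
  have := log_le_sub_one_of_pos (sqrt_pos.mpr hx)
  rw [log_sqrt hx.le] at this
  linarith

lemma mul_sqrt_le_div_log {c u : ℝ} (hc : 0 < c) (hu : 0 < u) (hcu : 1 < 2 * c * u) :
    9 / (20 * √(2 * c)) * √u ≤ 9 / 10 * u / log (2 * c * u) := by
  have hlog : 0 < log (2 * c * u) := log_pos hcu
  have hsqrt : 0 < √(2 * c) := sqrt_pos.mpr (by positivity)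
  rw [le_div_iff₀ hlog]
  calc 9 / (20 * √(2 * c)) * √u * log (2 * c * u)
      ≤ 9 / (20 * √(2 * c)) * √u * (2 * (√(2 * c) * √u)) := by
        rw [← sqrt_mul (by positivity)]
        gcongr
        exact log_le_two_mul_sqrt (by positivity)
    _ = 9 / 10 * u := by
        field_simp
        rw [sq_sqrt hu.le]
        ring

lemma pow_six_le_two_pow_ceil {u : ℝ} (hu : 1 ≤ u) : u ^ 6 ≤ 2 ^ ⌈10 * log u⌉₊ := by
  have ht : 10 * log u ≤ ⌈10 * log u⌉₊ := Nat.le_ceil _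
  have hlogu : 0 ≤ log u := log_nonneg hu
  have hlog2 := log_two_gt_d9
  calc u ^ 6 = exp ((6 : ℕ) * log u) := by rw [exp_nat_mul, exp_log (by linarith)]
    _ ≤ exp (⌈10 * log u⌉₊ * log 2) := exp_le_exp.mpr (by push_cast; nlinarith)
    _ = 2 ^ ⌈10 * log u⌉₊ := by rw [exp_nat_mul, exp_log two_pos]

lemma exceptionalCountBound_le {M u K L T : ℝ} (hM : M = exp u) (hT : 0 < T)
    (hL : 8 * K ≤ exp (L / 20)) (hlin : 16 * K ≤ exp (u / 10)) (hT_ge : 8 * K ^ 2 ≤ T)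
    (hquad : 16 * K ^ 2 ≤ exp u) :
    exceptionalCountBound M K L (exp (9 / 10 * u)) T ≤ M := by
  have hM0 : 0 < M := hM ▸ exp_pos u
  have e1 : 2 * K * exp (-L / 20) ≤ 1 / 4 := by
    rw [neg_div, exp_neg, ← div_eq_mul_inv, div_le_iff₀ (exp_pos _)]
    linarith
  have e2 : 4 * K * exp (9 / 10 * u) ≤ M / 4 := by
    have : M = exp (u / 10) * exp (9 / 10 * u) := by rw [hM, ← exp_add]; ring_nf
    rw [this]
    nlinarith [exp_pos (9 / 10 * u)]
  have e3 : 2 * K ^ 2 / T ≤ 1 / 4 := by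
    rw [div_le_iff₀ hT]; linarith
  calc exceptionalCountBound M K L (exp (9 / 10 * u)) T
      = M * (2 * K * exp (-L / 20)) + 4 * K * exp (9 / 10 * u) + M * (2 * K ^ 2 / T)
          + 4 * K ^ 2 := by rw [exceptionalCountBound]; ring
    _ ≤ M * (1 / 4) + M / 4 + M * (1 / 4) + M / 4 := by
        gcongr
        rw [hM]; linarith
    _ = M := by ring

lemma eventually_exceptionalCountBound_lt {c : ℝ} (hc : 0 < c) : ∀ᶠ M : ℕ in atTop,
    exceptionalCountBound M ⌊c * log M⌋₊ ⌊9 / 10 * log M / log (2 * c * log M)⌋₊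
      (exp (9 / 10 * log M)) (2 ^ ⌈10 * log (log M)⌉₊) < M + 1 := by
  -- `log (2cu) ≤ 2√(2cu)` makes every `L_p` larger than `b √u - 1`, where `u = log M`
  set b := 9 / (20 * √(2 * c))
  have hb : 0 < b / 20 := by positivity
  have hlog : Tendsto (fun M : ℕ => log M) atTop atTop :=
    tendsto_log_atTop.comp tendsto_natCast_atTop_atTop
  filter_upwards [hlog.eventually_ge_atTop 1,
    hlog.eventually ((tendsto_id.const_mul_atTop hc).eventually_ge_atTop 1),
    hlog.eventually
      (tendsto_sqrt_atTop.eventually (eventually_mul_pow_le_exp (8 * c * exp (1 / 20)) 2 hb)),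
    hlog.eventually (eventually_mul_pow_le_exp (16 * c) 1 (by norm_num : (0 : ℝ) < 1 / 10)),
    hlog.eventually (eventually_mul_pow_le_exp (16 * c ^ 2) 2 one_pos),
    hlog.eventually (eventually_ge_atTop (8 * c ^ 2))] with M hu hcu hsqrt hlin hquad hu_ge
  set u := log M
  set K : ℝ := (⌊c * u⌋₊ : ℝ)
  simp only [id] at hcu
  have hu0 : 0 < u := by linarith
  have hKu : K ≤ c * u := Nat.floor_le (by positivity)
  have hK0 : 0 ≤ K := Nat.cast_nonneg _
  have hM0 : M ≠ 0 := by rintro rfl; simp [u] at hu; linarith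
  have hM : (M : ℝ) = exp u := (exp_log (by positivity)).symm
  refine (exceptionalCountBound_le hM (by positivity) ?_ ?_ ?_ ?_).trans_lt (lt_add_one _)
  · have hfloor := Nat.sub_one_lt_floor (9 / 10 * u / log (2 * c * u))
    have hsq := mul_sqrt_le_div_log hc hu0 (by linarith)
    rw [sq_sqrt hu0.le] at hsqrt
    calc 8 * K ≤ 8 * c * u := by linarith
      _ ≤ exp (b / 20 * √u) / exp (1 / 20) := by
          rw [le_div_iff₀ (exp_pos _)]; linarith
      _ = exp ((b * √u - 1) / 20) := by rw [← exp_sub]; ring_nf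
      _ ≤ _ := exp_le_exp.mpr (by linarith)
  · rw [pow_one] at hlin
    calc 16 * K ≤ 16 * c * u := by linarith
      _ ≤ exp (u / 10) := by rw [div_eq_inv_mul, ← one_div]; exact hlin
  · calc 8 * K ^ 2 ≤ 8 * c ^ 2 * u ^ 2 := by nlinarith
      _ ≤ u * u ^ 2 := by gcongr
      _ ≤ u ^ 6 := by
          rw [← pow_succ']; exact pow_le_pow_right₀ hu (by norm_num)
      _ ≤ 2 ^ ⌈10 * log u⌉₊ := pow_six_le_two_pow_ceil hu
  · rw [one_mul] at hquad
    nlinarith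

theorem stmt13 (c : ℝ) (hc : 0 < c) :
    ∃ M₀ : ℕ, ∀ M : ℕ, M₀ ≤ M →
      ∃ m ∈ Finset.Icc M (2 * M), ∀ p : ℕ, p.Prime →
        p ≤ 2 * ⌊c * Real.log M⌋₊ →
        ((((Finset.range ⌊(9 / 10 : ℝ) * Real.log M / Real.log p⌋₊).filter
              (fun j => (p + 1) / 2 ≤ m / p ^ j % p)).card : ℝ) ≥
            ((⌊(9 / 10 : ℝ) * Real.log M / Real.log p⌋₊ : ℝ) *
                (if p = 2 then 1 / 2 else ((p : ℝ) - 1) / (2 * p))) / 2) ∧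
          ∀ i ∈ Finset.Icc 1 ⌊c * Real.log M⌋₊,
            ¬ p ^ (⌊Real.log (⌊c * Real.log M⌋₊ : ℝ) / Real.log p⌋₊ +
                ⌈10 * Real.log (Real.log M)⌉₊) ∣ (m + i) := by
  obtain ⟨M₀, hM₀⟩ := eventually_atTop.mp (eventually_exceptionalCountBound_lt hc)
  refine ⟨M₀, fun M hM => ?_⟩
  have hdigits : ∀ p : ℕ, p.Prime → p ≤ 2 * ⌊c * log M⌋₊ →
      ⌊9 / 10 * log M / log (2 * c * log M)⌋₊ ≤ ⌊9 / 10 * log M / log p⌋₊ ∧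
        (p : ℝ) ^ ⌊9 / 10 * log M / log p⌋₊ ≤ exp (9 / 10 * log M) := fun p hp hpk => by
    have hp1 : (1 : ℝ) < p := by exact_mod_cast hp.one_lt
    have hpk' : (p : ℝ) ≤ 2 * c * log M := by
      calc (p : ℝ) ≤ 2 * ⌊c * log M⌋₊ := by exact_mod_cast hpk
        _ ≤ 2 * (c * log M) := by gcongr; exact Nat.floor_le (by positivity)
        _ = 2 * c * log M := by ring
    exact ⟨Nat.floor_le_floor (div_le_div_of_nonneg_left (by positivity) (log_pos hp1)
      (log_le_log (by positivity) hpk')), pow_floor_div_log_le_exp hp1 (by positivity)⟩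
  exact exists_mem_Icc_forall_prime_le_isGood (exp_pos _).le hdigits (hM₀ M hM)
end

section
/- Let c > 1/(2 log 2) and set k(m) = ⌊c log m⌋. Then the set of natural numbers m for which (m+1)(m+2)⋯(m+k(m)) does NOT divide C(2m, m) has asymptotic density 1. -/
/-!
Legendre's formula gives `ν₂((m + 1) ⋯ (m + k)) = k + s₂(m) - s₂(m + k)` and
`ν₂(C(2m, m)) = s₂(m)`, so the product can divide `C(2m, m)` only if `s₂(m + k) ≥ k`.
For `N^η < m ≤ N` with `1 / (2 c log 2) < η < 1` this forces `n = m + k(m) < 2^L ≈ 4N` to have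
at least `c η log N` binary ones, which exceeds the mean `L / 2` of `s₂` on `[0, 2^L)` by a
multiple of `log N`. The map `m ↦ m + k(m)` is injective and `s₂` has variance `L / 4` on
`[0, 2^L)`, so by Chebyshev's inequality there are only `O(N / log N)` such `m`.
-/

open Real Filter
open Finset Topology
open scoped Nat

def binaryDigitSum (n : ℕ) : ℕ := (Nat.digits 2 n).sum

lemma binaryDigitSum_two_mul (n : ℕ) : binaryDigitSum (2 * n) = binaryDigitSum n := by
  rcases Nat.eq_zero_or_pos n with rfl | hn
  · rfl
  · simpa [binaryDigitSum] using
      congrArg List.sum (Nat.digits_base_pow_mul (k := 1) one_lt_two hn)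

lemma binaryDigitSum_two_pow_add {n L : ℕ} (h : n < 2 ^ L) :
    binaryDigitSum (2 ^ L + n) = binaryDigitSum n + 1 := by
  rw [add_comm]
  rcases Nat.eq_zero_or_pos n with rfl | hn
  · simpa [binaryDigitSum] using
      congrArg List.sum (Nat.digits_base_pow_mul (k := L) one_lt_two one_pos)
  · have hlen : (Nat.digits 2 n).length ≤ L := by
      rw [Nat.length_digits 2 n one_lt_two hn.ne']
      exact Nat.log_lt_of_lt_pow hn.ne' h
    have hdigits := Nat.digits_append_zeroes_append_digits (b := 2)
      (k := L - (Nat.digits 2 n).length) (m := 1) (n := n) one_lt_two one_pos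
    rw [Nat.add_sub_cancel' hlen, mul_one] at hdigits
    rw [binaryDigitSum, ← hdigits]
    simp [binaryDigitSum]

lemma padicValNat_two_factorial_add_binaryDigitSum (n : ℕ) :
    padicValNat 2 n ! + binaryDigitSum n = n := by
  have := sub_one_mul_padicValNat_factorial (p := 2) n
  have := Nat.digit_sum_le 2 n
  simp only [binaryDigitSum]
  omega

lemma padicValNat_two_centralBinom (m : ℕ) :
    padicValNat 2 m.centralBinom = binaryDigitSum m := by
  have h := sub_one_mul_padicValNat_choose_eq_sub_sum_digits' (p := 2) (n := m) (k := m)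
  rw [← two_mul, ← Nat.centralBinom_eq_two_mul_choose] at h
  have := binaryDigitSum_two_mul m
  simp only [binaryDigitSum] at *
  omega

lemma prod_Icc_add_eq_ascFactorial (m k : ℕ) :
    ∏ i ∈ Icc 1 k, (m + i) = (m + 1).ascFactorial k := by
  rw [Nat.ascFactorial_eq_prod_range, range_eq_Ico, ← Ico_add_one_right_eq_Icc,
    ← prod_Ico_add' _ 0 k 1]
  simp only [add_assoc, add_comm 1]

lemma padicValNat_two_prod_Icc_add (m k : ℕ) :
    padicValNat 2 (∏ i ∈ Icc 1 k, (m + i)) + binaryDigitSum (m + k) = k + binaryDigitSum m := by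
  have hval := congrArg (padicValNat 2) (Nat.factorial_mul_ascFactorial m k)
  rw [padicValNat.mul (Nat.factorial_ne_zero m) (Nat.ascFactorial_pos m k).ne',
    ← prod_Icc_add_eq_ascFactorial] at hval
  have := padicValNat_two_factorial_add_binaryDigitSum m
  have := padicValNat_two_factorial_add_binaryDigitSum (m + k)
  omega

lemma le_binaryDigitSum_of_prod_Icc_add_dvd_choose {m k : ℕ}
    (h : ∏ i ∈ Icc 1 k, (m + i) ∣ (2 * m).choose m) : k ≤ binaryDigitSum (m + k) := by
  rw [← Nat.centralBinom_eq_two_mul_choose] at h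
  have hval : padicValNat 2 (∏ i ∈ Icc 1 k, (m + i)) ≤ padicValNat 2 m.centralBinom :=
    (padicValNat_dvd_iff_le (Nat.centralBinom_ne_zero m)).mp (pow_padicValNat_dvd.trans h)
  have := padicValNat_two_prod_Icc_add m k
  rw [padicValNat_two_centralBinom] at hval
  omega

lemma sum_range_two_pow_sq_two_mul_binaryDigitSum_sub (L : ℕ) :
    ∑ n ∈ range (2 ^ L), (2 * (binaryDigitSum n : ℝ) - L) ^ 2 = (L : ℝ) * 2 ^ L := by
  induction L with
  | zero => simp [binaryDigitSum]
  | succ L ih =>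
    have hshift : ∀ n ∈ range (2 ^ L),
        (2 * (binaryDigitSum (2 ^ L + n) : ℝ) - (L + 1 : ℕ)) ^ 2
          = (2 * (binaryDigitSum n : ℝ) - L + 1) ^ 2 := by
      intro n hn
      rw [binaryDigitSum_two_pow_add (mem_range.1 hn)]
      push_cast; ring
    rw [pow_succ, mul_two, sum_range_add, sum_congr rfl hshift, ← sum_add_distrib]
    have hpair : ∀ n ∈ range (2 ^ L),
        (2 * (binaryDigitSum n : ℝ) - (L + 1 : ℕ)) ^ 2 + (2 * (binaryDigitSum n : ℝ) - L + 1) ^ 2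
          = 2 * (2 * (binaryDigitSum n : ℝ) - L) ^ 2 + 2 := by
      intro n _
      push_cast; ring
    rw [sum_congr rfl hpair, sum_add_distrib, ← mul_sum, ih]
    simp only [sum_const, card_range, nsmul_eq_mul]
    push_cast; ring

lemma card_filter_le_binaryDigitSum_le_div_sq {L K : ℕ} {t : ℝ} (ht : 0 < t)
    (hK : L + t ≤ 2 * K) :
    (#{n ∈ range (2 ^ L) | K ≤ binaryDigitSum n} : ℝ) ≤ L * 2 ^ L / t ^ 2 := by
  rw [le_div_iff₀ (by positivity), ← sum_range_two_pow_sq_two_mul_binaryDigitSum_sub]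
  calc (#{n ∈ range (2 ^ L) | K ≤ binaryDigitSum n} : ℝ) * t ^ 2
      ≤ ∑ n ∈ range (2 ^ L) with K ≤ binaryDigitSum n, (2 * (binaryDigitSum n : ℝ) - L) ^ 2 := by
        rw [← nsmul_eq_mul]
        refine card_nsmul_le_sum _ _ _ fun n hn => ?_
        have : (K : ℝ) ≤ binaryDigitSum n := by exact_mod_cast (mem_filter.1 hn).2
        exact pow_le_pow_left₀ ht.le (by linarith) 2
    _ ≤ ∑ n ∈ range (2 ^ L), (2 * (binaryDigitSum n : ℝ) - L) ^ 2 :=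
        sum_le_sum_of_subset_of_nonneg (filter_subset _ _) fun _ _ _ => sq_nonneg _

lemma card_filter_le_binaryDigitSum_shift_le {k : ℕ → ℕ} (hk : Monotone k) (M : ℕ) {N L : ℕ}
    (hNL : N + k N < 2 ^ L) :
    #{m ∈ Icc 1 N | k m ≤ binaryDigitSum (m + k m)} ≤
      M + #{n ∈ range (2 ^ L) | k (M + 1) ≤ binaryDigitSum n} := by
  have hsplit : {m ∈ Icc 1 N | k m ≤ binaryDigitSum (m + k m)} ⊆
      Icc 1 M ∪ {m ∈ Icc (M + 1) N | k m ≤ binaryDigitSum (m + k m)} := by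
    intro m
    simp only [mem_filter, mem_union, mem_Icc]
    omega
  have hshift : StrictMono fun m => m + k m := strictMono_id.add_monotone hk
  calc #{m ∈ Icc 1 N | k m ≤ binaryDigitSum (m + k m)}
      ≤ #(Icc 1 M) + #{m ∈ Icc (M + 1) N | k m ≤ binaryDigitSum (m + k m)} :=
        (card_le_card hsplit).trans (card_union_le _ _)
    _ ≤ M + #{n ∈ range (2 ^ L) | k (M + 1) ≤ binaryDigitSum n} := by
        refine add_le_add (by simp) (card_le_card_of_injOn _ (fun m hm => ?_)
          hshift.injective.injOn)
        simp only [coe_filter, mem_Icc, Set.mem_ofPred_eq, mem_range] at hm ⊢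
        have := hk hm.1.1
        have := hk hm.1.2
        omega

lemma monotone_floor_mul_log {c : ℝ} (hc : 0 ≤ c) : Monotone fun m : ℕ => ⌊c * log m⌋₊ := by
  intro a b hab
  refine Nat.floor_le_floor (mul_le_mul_of_nonneg_left ?_ hc)
  rcases a.eq_zero_or_pos with rfl | ha
  · simpa using log_natCast_nonneg b
  · exact log_le_log (by exact_mod_cast ha) (by exact_mod_cast hab)

lemma sub_one_le_floor_mul_log_floor_rpow_add_one {c : ℝ} (hc : 0 ≤ c) (η : ℝ) {N : ℕ}
    (hN : N ≠ 0) : c * η * log N - 1 ≤ ⌊c * log ((⌊(N : ℝ) ^ η⌋₊ + 1 : ℕ) : ℝ)⌋₊ := by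
  have hN' : (0 : ℝ) < N := by positivity
  have hlog : η * log N ≤ log ((⌊(N : ℝ) ^ η⌋₊ + 1 : ℕ) : ℝ) := by
    rw [← log_rpow hN']
    exact log_le_log (by positivity) (by exact_mod_cast (Nat.lt_floor_add_one _).le)
  have := Nat.sub_one_lt_floor (c * log ((⌊(N : ℝ) ^ η⌋₊ + 1 : ℕ) : ℝ))
  nlinarith

lemma eventually_floor_mul_log_le (c : ℝ) : ∀ᶠ N : ℕ in atTop, ⌊c * log N⌋₊ ≤ N := by
  have h := ((isLittleO_log_id_atTop.const_mul_left c).bound one_pos).filter_mono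
    tendsto_natCast_atTop_atTop
  filter_upwards [h] with N hN
  refine Nat.floor_le_of_le ((le_abs_self _).trans ?_)
  simpa using hN

lemma card_filter_prod_Icc_dvd_choose_le {c η δ : ℝ} (hc : 0 ≤ c)
    (hδ : δ ≤ c * η - 1 / (2 * log 2)) {N : ℕ} (hN : 4 ≤ δ * log N) (hkN : ⌊c * log N⌋₊ ≤ N) :
    (#((Icc 1 N).filter fun m : ℕ => ∏ i ∈ Icc 1 ⌊c * log m⌋₊, (m + i) ∣ (2 * m).choose m) : ℝ)
      ≤ N ^ η + (logb 2 N + 2) * (4 * N) / (δ * log N) ^ 2 := by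
  set k : ℕ → ℕ := fun m => ⌊c * log m⌋₊ with hk_def
  have hk : Monotone k := monotone_floor_mul_log hc
  set M := ⌊(N : ℝ) ^ η⌋₊
  set L := Nat.log 2 N + 2
  have hN0 : N ≠ 0 := by rintro rfl; norm_num at hN
  have hL : (L : ℝ) ≤ logb 2 N + 2 := by
    have := natLog_le_logb N 2
    simp only [L]
    push_cast at this ⊢
    linarith
  have h2L : (2 : ℝ) ^ L ≤ 4 * N := by
    have : 2 ^ L ≤ 4 * N := by
      have := Nat.pow_log_le_self 2 hN0
      rw [pow_add]
      omega
    exact_mod_cast this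
  have hNL : N + k N < 2 ^ L := by
    have := Nat.lt_pow_succ_log_self one_lt_two N
    have : k N ≤ N := hkN
    rw [pow_add, pow_succ] at *
    omega
  have hK : (L : ℝ) + δ * log N ≤ 2 * k (M + 1) := by
    have hKlow := sub_one_le_floor_mul_log_floor_rpow_add_one hc η hN0
    have hδlog : δ * log N ≤ (c * η - 1 / (2 * log 2)) * log N :=
      mul_le_mul_of_nonneg_right hδ (log_natCast_nonneg N)
    have : logb 2 N = 2 * (1 / (2 * log 2)) * log N := by
      rw [logb]; field_simp
    simp only [hk_def]
    nlinarith
  have hbad : #{m ∈ Icc 1 N | ∏ i ∈ Icc 1 (k m), (m + i) ∣ (2 * m).choose m} ≤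
      #{m ∈ Icc 1 N | k m ≤ binaryDigitSum (m + k m)} :=
    card_le_card <| monotone_filter_right _ fun _ _ =>
      le_binaryDigitSum_of_prod_Icc_add_dvd_choose
  calc (#{m ∈ Icc 1 N | ∏ i ∈ Icc 1 (k m), (m + i) ∣ (2 * m).choose m} : ℝ)
      ≤ M + #{n ∈ range (2 ^ L) | k (M + 1) ≤ binaryDigitSum n} := by
        exact_mod_cast hbad.trans (card_filter_le_binaryDigitSum_shift_le hk M hNL)
    _ ≤ N ^ η + (logb 2 N + 2) * (4 * N) / (δ * log N) ^ 2 := by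
        gcongr
        · exact Nat.floor_le (by positivity)
        · refine (card_filter_le_binaryDigitSum_le_div_sq (by linarith) hK).trans ?_
          gcongr
          linarith

lemma tendsto_rpow_add_log_div_log_sq_div {η δ : ℝ} (hη : η < 1) (hδ : δ ≠ 0) :
    Tendsto (fun N : ℕ => ((N : ℝ) ^ η + (logb 2 N + 2) * (4 * N) / (δ * log N) ^ 2) / N)
      atTop (𝓝 0) := by
  have hpow : Tendsto (fun x : ℝ => x ^ η / x) atTop (𝓝 0) := by
    refine (tendsto_rpow_neg_atTop (by linarith : 0 < 1 - η)).congr' ?_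
    filter_upwards [eventually_gt_atTop 0] with x hx
    rw [neg_sub, rpow_sub_one hx.ne']
  have hlog : Tendsto (fun x : ℝ => (x / log 2 + 2) * 4 / (δ * x) ^ 2) atTop (𝓝 0) := by
    have h := tendsto_inv_atTop_zero (𝕜 := ℝ)
    have := (h.const_mul (4 / log 2 / δ ^ 2)).add ((h.pow 2).const_mul (8 / δ ^ 2))
    simp only [mul_zero, add_zero, ne_eq, OfNat.ofNat_ne_zero, not_false_eq_true,
      zero_pow] at this
    refine this.congr' ?_
    filter_upwards [eventually_gt_atTop 0] with x hx
    field_simp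
    ring
  have := (hpow.comp tendsto_natCast_atTop_atTop).add
    (hlog.comp (tendsto_log_atTop.comp tendsto_natCast_atTop_atTop))
  rw [add_zero] at this
  refine this.congr' ?_
  filter_upwards [eventually_gt_atTop 0] with N hN
  simp only [Function.comp_apply, logb]
  field_simp

lemma tendsto_card_filter_not_div {p : ℕ → Prop} [DecidablePred p]
    (h : Tendsto (fun N : ℕ => (#{m ∈ Icc 1 N | p m} : ℝ) / N) atTop (𝓝 0)) :
    Tendsto (fun N : ℕ => (#{m ∈ Icc 1 N | ¬ p m} : ℝ) / N) atTop (𝓝 1) := by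
  have := (tendsto_const_nhds (x := (1 : ℝ))).sub h
  rw [sub_zero] at this
  refine this.congr' ?_
  filter_upwards [eventually_gt_atTop 0] with N hN
  have hcard : (#{m ∈ Icc 1 N | p m} : ℝ) + #{m ∈ Icc 1 N | ¬ p m} = N := by
    rw [← Nat.cast_add, card_filter_add_card_filter_not, Nat.card_Icc, add_tsub_cancel_right]
  field_simp
  linarith

theorem stmt17 (c : ℝ) (hc : 1 / (2 * Real.log 2) < c) :
    Tendsto (fun N : ℕ =>
        (((Finset.Icc 1 N).filter (fun m : ℕ =>
            ¬ (∏ i ∈ Finset.Icc 1 ⌊c * Real.log m⌋₊, (m + i)) ∣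
              Nat.choose (2 * m) m)).card : ℝ) / N)
      atTop (nhds 1) := by
  have hlog2 : 0 < log 2 := log_pos one_lt_two
  have hc0 : 0 < c := lt_trans (by positivity) hc
  have hc1 : 1 / (2 * c * log 2) < 1 := by
    rw [div_lt_iff₀ (by positivity)] at hc
    rw [div_lt_one (by positivity)]
    linarith
  obtain ⟨η, hη, hη1⟩ := exists_between hc1
  set δ := c * η - 1 / (2 * log 2)
  have hδ : 0 < δ := by
    rw [div_lt_iff₀ (by positivity)] at hη
    rw [sub_pos, div_lt_iff₀ (by positivity)]
    linarith
  have hδlog : ∀ᶠ N : ℕ in atTop, 4 ≤ δ * log N :=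
    ((tendsto_log_atTop.comp tendsto_natCast_atTop_atTop).const_mul_atTop hδ).eventually_ge_atTop 4
  refine tendsto_card_filter_not_div <|
    squeeze_zero' (Eventually.of_forall fun N => by positivity) ?_
      (tendsto_rpow_add_log_div_log_sq_div hη1 hδ.ne')
  filter_upwards [hδlog, eventually_floor_mul_log_le c] with N hN hkN
  gcongr
  exact card_filter_prod_Icc_dvd_choose_le hc0.le le_rfl hN hkN
end
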